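/- arXiv:1210.7539 — 3 statements merged into one kernel-verified Lean document; each statement's English description precedes it below -/
import Mathlib

section
/- Let β1, β2 be reals with 0 ≤ β1 ≤ β2 and β2 > 0, and define f(x) = β2·(1 − 2^{−x}) + β1·2^{−x} for real x. Then for every real b with b ≥ 1, f(⌊b⌋) ≥ (1/2)·f(b), where ⌊b⌋ denotes the floor of b. -/
/-- Inequality (13): for the MISO RVQ rate `f(x) = β2 (1 − 2^{−x}) + β1 2^{−x}`
with `0 ≤ β1 ≤ β2` and `β2 > 0`, rounding a fractional allocation `b ≥ 1` down to
`⌊b⌋` loses at most a factor `1/2`: `f(⌊b⌋) ≥ (1/2) f(b)`. -/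
theorem rounding_loss_ge_one (β1 β2 : ℝ) (hβ1 : 0 ≤ β1) (hβ12 : β1 ≤ β2) (hβ2 : 0 < β2)
    (f : ℝ → ℝ) (hf : ∀ x : ℝ, f x = β2 * (1 - (2 : ℝ) ^ (-x)) + β1 * (2 : ℝ) ^ (-x)) :
    ∀ b : ℝ, 1 ≤ b → (1 / 2) * f b ≤ f ((⌊b⌋ : ℤ) : ℝ) := by
  intro b hb
  rw [hf, hf]
  have hfl : (1 : ℝ) ≤ ((⌊b⌋ : ℤ) : ℝ) := by
    exact_mod_cast Int.le_floor.mpr (by exact_mod_cast hb)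
  have hu : (2 : ℝ) ^ (-(((⌊b⌋ : ℤ) : ℝ))) ≤ 1 / 2 := by
    calc (2 : ℝ) ^ (-(((⌊b⌋ : ℤ) : ℝ))) ≤ (2 : ℝ) ^ (-(1 : ℝ)) := by
          apply Real.rpow_le_rpow_of_exponent_le (by norm_num) (by linarith)
      _ = 1 / 2 := by
          rw [Real.rpow_neg_one]; norm_num
  have hv : (0 : ℝ) < (2 : ℝ) ^ (-b) := Real.rpow_pos_of_pos (by norm_num) _
  nlinarith [hv]
end

section
/- Let β1, β2 be reals with 0 < β1 ≤ β2, and define f(x) = β2·(1 − 2^{−x}) + β1·2^{−x} for real x. Then for every real b with 0 ≤ b < 1, f(0) ≥ f(b) / ( (1/2)·(β2/β1) + 1 ); equivalently, since f(0) = β1, one has ( (1/2)·β2 + β1 ) ≥ f(b). -/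
/-- Inequality (14): for the MISO RVQ rate `f(x) = β2 (1 − 2^{−x}) + β1 2^{−x}`
with `0 < β1 ≤ β2`, rounding a fractional allocation `0 ≤ b < 1` down to `0` bits
satisfies `f(0) ≥ f(b) / ((1/2)(β2/β1) + 1)`; equivalently, since `f(0) = β1`,
`(1/2) β2 + β1 ≥ f(b)`. -/
theorem rounding_loss_lt_one (β1 β2 : ℝ) (hβ1 : 0 < β1) (hβ12 : β1 ≤ β2)
    (f : ℝ → ℝ) (hf : ∀ x : ℝ, f x = β2 * (1 - (2 : ℝ) ^ (-x)) + β1 * (2 : ℝ) ^ (-x)) :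
    ∀ b : ℝ, 0 ≤ b → b < 1 →
      f b / ((1 / 2) * (β2 / β1) + 1) ≤ f 0 ∧ f b ≤ (1 / 2) * β2 + β1 := by
  intro b hb0 hb1
  have h2 : ((2:ℝ) : ℝ) ^ (-(1:ℝ)) ≤ (2:ℝ) ^ (-b) :=
    Real.rpow_le_rpow_of_exponent_le one_le_two (by linarith)
  have h2' : (2:ℝ) ^ (-(1:ℝ)) = 1/2 := by
    rw [Real.rpow_neg_one]; norm_num
  rw [h2'] at h2
  have key : f b ≤ (1/2) * β2 + β1 := by
    rw [hf b]; nlinarith [h2, sub_nonneg.mpr hβ12]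
  refine ⟨?_, key⟩
  have hf0 : f 0 = β1 := by
    rw [hf 0]; simp
  rw [hf0]
  rw [div_le_iff₀ (by have hb2 : (0:ℝ) < β2 := lt_of_lt_of_le hβ1 hβ12; positivity)]
  have : β1 * ((1/2) * (β2/β1) + 1) = (1/2) * β2 + β1 := by
    field_simp
  rw [this]; exact key
end

section
/- Let L be a positive integer and for each k = 1,…,L let q_k ≥ 0 and let β1_k, β2_k be reals with 0 < β1_k ≤ β2_k. Define f_k(x) = β2_k·(1 − 2^{−x}) + β1_k·2^{−x} for real x. Given any real allocation b_1,…,b_L with b_k ≥ 0, define the rounded allocation b'_k = ⌊b_k⌋ if b_k ≥ 1 and b'_k = 0 if b_k < 1. Then Σ_{k=1}^L q_k·f_k(b'_k) ≥ γ · Σ_{k=1}^L q_k·f_k(b_k), where γ = min{ 1/2 , 1 / ( (1/2)·max_{k}(β2_k/β1_k) + 1 ) }. In particular, if β2_k ≤ 2·β1_k for all k, then Σ_{k=1}^L q_k·f_k(b'_k) ≥ (1/2)·Σ_{k=1}^L q_k·f_k(b_k). -/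
lemma key_round (β1 β2 γ b : ℝ) (h1 : 0 < β1) (h12 : β1 ≤ β2) (hb : 0 ≤ b)
    (hγ0 : 0 ≤ γ) (hγ : γ * (β1 + β2) ≤ 2 * β1) :
    γ * (β2 * (1 - (2:ℝ) ^ (-b)) + β1 * (2:ℝ) ^ (-b)) ≤
      β2 * (1 - (2:ℝ) ^ (-(if 1 ≤ b then ((⌊b⌋ : ℤ) : ℝ) else 0)))
        + β1 * (2:ℝ) ^ (-(if 1 ≤ b then ((⌊b⌋ : ℤ) : ℝ) else 0)) := by
  have h2 : (1:ℝ) ≤ 2 := by norm_num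
  have hs0 : (0:ℝ) < (2:ℝ) ^ (-b) := Real.rpow_pos_of_pos (by norm_num) _
  have hhalf : (2:ℝ) ^ (-(1:ℝ)) = 1/2 := by
    rw [show (-(1:ℝ)) = ((-1 : ℤ) : ℝ) by norm_num, Real.rpow_intCast]
    norm_num
  by_cases h : 1 ≤ b
  · rw [if_pos h]
    set s : ℝ := (2:ℝ) ^ (-b) with hs
    set s' : ℝ := (2:ℝ) ^ (-((⌊b⌋ : ℤ) : ℝ)) with hs'
    have hs2 : s ≤ 1/2 := by
      rw [← hhalf]
      exact Real.rpow_le_rpow_of_exponent_le h2 (by linarith)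
    have hfl : b - 1 < ((⌊b⌋ : ℤ) : ℝ) := Int.sub_one_lt_floor b
    have hss : s' ≤ 2 * s := by
      have : s' ≤ (2:ℝ) ^ (1 - b) :=
        Real.rpow_le_rpow_of_exponent_le h2 (by linarith)
      have h21 : (2:ℝ) ^ (1 - b) = 2 * s := by
        rw [show (1 - b) = 1 + (-b) by ring, Real.rpow_add (by norm_num), Real.rpow_one]
      linarith
    have hs'0 : 0 < s' := Real.rpow_pos_of_pos (by norm_num) _
    nlinarith [mul_nonneg hγ0 hs0.le, mul_nonneg hγ0 (mul_nonneg (sub_nonneg.2 h12) hs0.le),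
      mul_le_mul_of_nonneg_left hs2 (mul_nonneg hγ0 (sub_nonneg.2 h12)),
      mul_le_mul_of_nonneg_left hss (sub_nonneg.2 h12),
      mul_le_mul_of_nonneg_left hs2 (sub_nonneg.2 h12)]
  · rw [if_neg h]
    push_neg at h
    simp only [neg_zero, Real.rpow_zero]
    have hsge : 1/2 ≤ (2:ℝ) ^ (-b) := by
      rw [← hhalf]
      exact Real.rpow_le_rpow_of_exponent_le h2 (by linarith)
    have hsle : (2:ℝ) ^ (-b) ≤ 1 := Real.rpow_le_one_of_one_le_of_nonpos h2 (by linarith)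
    nlinarith [mul_le_mul_of_nonneg_left hsge (mul_nonneg hγ0 (sub_nonneg.2 h12))]

/-- The approximation-factor computation (15): rounding the fractional solution of the
convex relaxation (`b'_k = ⌊b_k⌋` if `b_k ≥ 1`, else `0`) retains at least a fraction
`γ = min{1/2, 1/((1/2) max_k (β2_k/β1_k) + 1)}` of the weighted sum-rate
`∑_k q_k f_k(b_k)` with `f_k(x) = β2_k (1 − 2^{−x}) + β1_k 2^{−x}`; in particular, if
`β2_k ≤ 2 β1_k` for all `k`, the rounded allocation is a `1/2`-approximation. -/
theorem rounding_approximation_factor (L : ℕ) (hL : 0 < L)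
    (q : Fin L → ℝ) (hq : ∀ k, 0 ≤ q k)
    (β1 β2 : Fin L → ℝ) (hβ1 : ∀ k, 0 < β1 k) (hβ12 : ∀ k, β1 k ≤ β2 k)
    (f : Fin L → ℝ → ℝ)
    (hf : ∀ k (x : ℝ), f k x = β2 k * (1 - (2 : ℝ) ^ (-x)) + β1 k * (2 : ℝ) ^ (-x))
    (b : Fin L → ℝ) (hb : ∀ k, 0 ≤ b k)
    (b' : Fin L → ℝ)
    (hb' : ∀ k, b' k = if 1 ≤ b k then ((⌊b k⌋ : ℤ) : ℝ) else 0)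
    (γ : ℝ)
    (hγ : γ = min (1 / 2)
      (1 / ((1 / 2) * (Finset.univ.sup' ⟨⟨0, hL⟩, Finset.mem_univ _⟩
        (fun k => β2 k / β1 k)) + 1))) :
    γ * (∑ k, q k * f k (b k)) ≤ ∑ k, q k * f k (b' k) ∧
    ((∀ k, β2 k ≤ 2 * β1 k) →
      (1 / 2) * (∑ k, q k * f k (b k)) ≤ ∑ k, q k * f k (b' k)) := by
  have hne : (Finset.univ : Finset (Fin L)).Nonempty := ⟨⟨0, hL⟩, Finset.mem_univ _⟩
  set M : ℝ := Finset.univ.sup' ⟨⟨0, hL⟩, Finset.mem_univ _⟩ (fun k => β2 k / β1 k) with hM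
  have hMk : ∀ k, β2 k / β1 k ≤ M := fun k => Finset.le_sup' (fun k => β2 k / β1 k) (Finset.mem_univ k)
  have hM1 : (1:ℝ) ≤ M := by
    refine le_trans ?_ (hMk ⟨0, hL⟩)
    rw [le_div_iff₀ (hβ1 _)]
    simpa using hβ12 ⟨0, hL⟩
  have hden : (0:ℝ) < (1/2) * M + 1 := by linarith
  have hγ0 : 0 ≤ γ := by
    rw [hγ]
    exact le_min (by norm_num) (by positivity)
  have hγ2 : γ ≤ 1/2 := hγ ▸ min_le_left _ _
  have hγM : γ * ((1/2) * M + 1) ≤ 1 := by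
    have := hγ ▸ min_le_right (1/2 : ℝ) (1 / ((1/2) * M + 1))
    calc γ * ((1/2)*M + 1) ≤ (1 / ((1/2)*M + 1)) * ((1/2)*M + 1) :=
          mul_le_mul_of_nonneg_right this hden.le
      _ = 1 := by field_simp
  have hkey : ∀ k, γ * (β1 k + β2 k) ≤ 2 * β1 k := by
    intro k
    have h2M : β2 k ≤ M * β1 k := by
      have := (div_le_iff₀ (hβ1 k)).mp (hMk k)
      linarith
    nlinarith [mul_nonneg hγ0 (hβ1 k).le, mul_le_mul_of_nonneg_left h2M hγ0,
      mul_le_mul_of_nonneg_right hγM (hβ1 k).le]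
  have main : ∀ γ' : ℝ, 0 ≤ γ' → (∀ k, γ' * (β1 k + β2 k) ≤ 2 * β1 k) →
      γ' * (∑ k, q k * f k (b k)) ≤ ∑ k, q k * f k (b' k) := by
    intro γ' hγ'0 hγ'
    rw [Finset.mul_sum]
    refine Finset.sum_le_sum fun k _ => ?_
    rw [hf, hf, hb', mul_left_comm]
    exact mul_le_mul_of_nonneg_left
      (key_round (β1 k) (β2 k) γ' (b k) (hβ1 k) (hβ12 k) (hb k) hγ'0 (hγ' k)) (hq k)
  refine ⟨main γ hγ0 hkey, fun h2 => ?_⟩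
  refine main (1/2) (by norm_num) fun k => ?_
  have := h2 k
  have := hβ1 k
  linarith
end
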